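/- arXiv:1910.04595 — 4 statements merged into one kernel-verified Lean document; each statement's English description precedes it below -/
import Mathlib

section
/- If s is a Salem number, then s^m is also a Salem number for every positive integer m. -/
/-!
The complex conjugates of `s ^ m` are exactly the `m`-th powers of the conjugates of `s`: the
conjugates of any element of `ℚ⟮s⟯` are its images under the `ℚ`-embeddings `ℚ⟮s⟯ → ℂ`, and these
embeddings commute with powers. So the conjugates of `s ^ m` are `s ^ m`, `s⁻ᵐ`, and numbers of
modulus `1`. The unit condition follows as well: up to sign, the constant coefficient of the
minimal polynomial is the product of the conjugates, whose moduli multiply to `s ^ m * s⁻ᵐ = 1`.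
-/

/-- A Salem number: a real algebraic integer `s > 1` which is a unit (constant
term of its minimal polynomial is `±1`), such that `1/s` is a Galois conjugate of `s`,
and every Galois conjugate of `s` other than `s` and `1/s` has absolute value `1`. -/
def IsSalem (s : ℝ) : Prop :=
  1 < s ∧ IsIntegral ℤ s ∧
    ((minpoly ℚ s).coeff 0 = 1 ∨ (minpoly ℚ s).coeff 0 = -1) ∧
    Polynomial.aeval (s⁻¹) (minpoly ℚ s) = 0 ∧
    ∀ z : ℂ, Polynomial.aeval z (minpoly ℚ s) = 0 →
      z = (s : ℂ) ∨ z = ((s⁻¹ : ℝ) : ℂ) ∨ ‖z‖ = 1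

open Polynomial IntermediateField

section PowConjugates

variable {K L C : Type*} [Field K] [Field L] [Field C] [Algebra K L] [Algebra K C] [IsAlgClosed C]

theorem exists_algHom_adjoin_simple_apply_eq {x y : L} (hx : IsIntegral K x) (hy : y ∈ K⟮x⟯)
    {z : C} (hz : aeval z (minpoly K y) = 0) : ∃ φ : K⟮x⟯ →ₐ[K] C, φ ⟨y, hy⟩ = z :=
  exists_algHom_adjoin_of_splits_of_aeval (by rintro _ rfl; exact ⟨hx, IsAlgClosed.splits _⟩) hy hz

theorem aeval_minpoly_pow_eq_zero_iff {x : L} (hx : IsIntegral K x) (n : ℕ) {z : C} :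
    aeval z (minpoly K (x ^ n)) = 0 ↔ ∃ w : C, aeval w (minpoly K x) = 0 ∧ w ^ n = z := by
  have hxn : x ^ n ∈ K⟮x⟯ := pow_mem (mem_adjoin_simple_self K x) n
  have apply_pow (φ : K⟮x⟯ →ₐ[K] C) : φ ⟨x ^ n, hxn⟩ = φ (AdjoinSimple.gen K x) ^ n := by
    rw [← map_pow]; rfl
  have aeval_apply (φ : K⟮x⟯ →ₐ[K] C) (t : K⟮x⟯) : aeval (φ t) (minpoly K (t : L)) = 0 := by
    rw [← minpoly_eq]; exact minpoly.aeval_algHom K φ t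
  constructor
  · intro hz
    obtain ⟨φ, rfl⟩ := exists_algHom_adjoin_simple_apply_eq hx hxn hz
    exact ⟨φ (AdjoinSimple.gen K x), aeval_apply φ _, (apply_pow φ).symm⟩
  · rintro ⟨w, hw, rfl⟩
    obtain ⟨φ, rfl⟩ := exists_algHom_adjoin_simple_apply_eq hx (mem_adjoin_simple_self K x) hw
    exact apply_pow φ ▸ aeval_apply φ _

end PowConjugates

theorem aeval_ofReal_eq_zero_iff (r : ℝ) (p : ℚ[X]) :
    aeval (r : ℂ) p = 0 ↔ aeval r p = 0 :=
  aeval_algebraMap_eq_zero_iff ℂ r p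

theorem norm_algebraMap_coeff_zero_eq_prod_norm_aroots {K C : Type*} [Field K] [NormedField C]
    [IsAlgClosed C] [Algebra K C] {p : K[X]} (hp : p.Monic) :
    ‖algebraMap K C (p.coeff 0)‖ = ((p.aroots C).map (‖·‖)).prod := by
  have h := (IsAlgClosed.splits (p.map (algebraMap K C))).coeff_zero_eq_prod_roots_of_monic
    (hp.map _)
  rw [coeff_map, ← aroots_def] at h
  rw [h, norm_mul, norm_pow, norm_neg, norm_one, one_pow, one_mul]
  exact (Multiset.prod_hom _ (normHom : C →*₀ ℝ)).symm

theorem coeff_zero_minpoly_eq_one_or_neg_one {x : ℝ} (hx : IsIntegral ℚ x) (hx1 : 1 < x)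
    (hinv : aeval x⁻¹ (minpoly ℚ x) = 0)
    (hroots : ∀ z : ℂ, aeval z (minpoly ℚ x) = 0 → z = x ∨ z = ((x⁻¹ : ℝ) : ℂ) ∨ ‖z‖ = 1) :
    (minpoly ℚ x).coeff 0 = 1 ∨ (minpoly ℚ x).coeff 0 = -1 := by
  set p := minpoly ℚ x
  have mem_aroots_iff (z : ℂ) : z ∈ p.aroots ℂ ↔ aeval z p = 0 := by
    rw [mem_aroots, and_iff_right (minpoly.ne_zero hx)]
  have hnodup : (p.aroots ℂ).Nodup := nodup_roots (minpoly.irreducible hx).separable.map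
  have hne : (x : ℂ) ≠ ((x⁻¹ : ℝ) : ℂ) := by
    exact_mod_cast ne_of_gt (inv_lt_one_of_one_lt₀ hx1 |>.trans hx1)
  have hx_mem : (x : ℂ) ∈ p.aroots ℂ :=
    (mem_aroots_iff _).2 ((aeval_ofReal_eq_zero_iff _ _).2 (minpoly.aeval ℚ x))
  have hinv_mem : ((x⁻¹ : ℝ) : ℂ) ∈ p.aroots ℂ := by
    rwa [mem_aroots_iff, aeval_ofReal_eq_zero_iff]
  have hx0 : ‖x‖ ≠ 0 := norm_ne_zero_iff.2 (zero_lt_one.trans hx1).ne'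
  have hprod : ((p.aroots ℂ).map (‖·‖)).prod = 1 := by
    change ∏ z ∈ ⟨p.aroots ℂ, hnodup⟩, ‖z‖ = 1
    rw [Finset.prod_eq_mul _ _ hne (fun z hz hz' => ?_) (absurd hx_mem) (absurd hinv_mem),
      Complex.norm_real, Complex.norm_real, norm_inv, mul_inv_cancel₀ hx0]
    exact ((hroots z ((mem_aroots_iff z).1 hz)).resolve_left hz'.1).resolve_left hz'.2
  have habs : |p.coeff 0| = 1 := by
    have h := norm_algebraMap_coeff_zero_eq_prod_norm_aroots (C := ℂ) (minpoly.monic hx)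
    rw [hprod, eq_ratCast, Complex.norm_ratCast] at h
    exact_mod_cast h
  exact abs_eq zero_le_one |>.mp habs

theorem salem_pow {s : ℝ} (hs : IsSalem s) : ∀ m : ℕ, 0 < m → IsSalem (s ^ m) := by
  intro m hm
  obtain ⟨hs1, hsℤ, -, hinv, hroots⟩ := hs
  have hsℚ : IsIntegral ℚ s := hsℤ.tower_top
  have hsm1 : 1 < s ^ m := one_lt_pow₀ hs1 hm.ne'
  have hinv_pow : (((s ^ m)⁻¹ : ℝ) : ℂ) = ((s⁻¹ : ℝ) : ℂ) ^ m := by push_cast; ring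
  have hroots_pow (z : ℂ) (hz : aeval z (minpoly ℚ (s ^ m)) = 0) :
      z = ((s ^ m : ℝ) : ℂ) ∨ z = (((s ^ m)⁻¹ : ℝ) : ℂ) ∨ ‖z‖ = 1 := by
    obtain ⟨w, hw, rfl⟩ := (aeval_minpoly_pow_eq_zero_iff hsℚ m).1 hz
    rcases hroots w hw with rfl | rfl | hw1
    · exact Or.inl (by push_cast; rfl)
    · exact Or.inr (Or.inl hinv_pow.symm)
    · exact Or.inr (Or.inr (by rw [norm_pow, hw1, one_pow]))
  have hinv_root : aeval (s ^ m)⁻¹ (minpoly ℚ (s ^ m)) = 0 := by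
    rw [← aeval_ofReal_eq_zero_iff, hinv_pow, aeval_minpoly_pow_eq_zero_iff hsℚ]
    exact ⟨_, (aeval_ofReal_eq_zero_iff _ _).2 hinv, rfl⟩
  exact ⟨hsm1, hsℤ.pow m,
    coeff_zero_minpoly_eq_one_or_neg_one (hsℚ.pow m) hsm1 hinv_root hroots_pow,
    hinv_root, hroots_pow⟩
end

section
/- Let s be a Salem number and let e^{iθ_1}, ..., e^{iθ_k} be its Galois conjugates on the unit circle with positive imaginary part. Then e^{iθ_1}, ..., e^{iθ_k} are multiplicatively independent: if the product of (e^{iθ_j})^{m_j} over j equals 1 for integers m_j, then all m_j = 0. -/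
/-! Given a relation `∏ zⱼ ^ mⱼ = 1` and an index `i`, choose a Galois automorphism of the
splitting field of the minimal polynomial of `s` sending `zᵢ` to `s`; it carries the relation
to one among conjugates of `s`. For `j ≠ i` the image of `zⱼ` is not `s` (injectivity) and not
`s⁻¹` (that would force `zⱼ = zᵢ⁻¹`, which lies in the lower half-plane), so it lies on the unit
circle. Taking absolute values leaves `s ^ mᵢ = 1`, whence `mᵢ = 0`. -/

open Polynomial IntermediateField

theorem IntermediateField.aeval_mk_eq_zero_iff {F K : Type*} [Field F] [Field K] [Algebra F K]
    {S : IntermediateField F K} {x : K} (hx : x ∈ S) (p : F[X]) :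
    aeval (⟨x, hx⟩ : S) p = 0 ↔ aeval x p = 0 := by
  rw [← ZeroMemClass.coe_eq_zero, ← aeval_coe]

theorem exists_algEquiv_adjoin_rootSet_apply_eq {F K : Type*} [Field F] [Field K] [Algebra F K]
    {p : F[X]} (hp : Irreducible p) (hsplit : (p.map (algebraMap F K)).Splits) {a b : K}
    (ha : a ∈ p.rootSet K) (hb : b ∈ p.rootSet K) :
    ∃ σ : Gal(adjoin F (p.rootSet K) / F),
      σ ⟨a, subset_adjoin F _ ha⟩ = ⟨b, subset_adjoin F _ hb⟩ := by
  have := adjoin_rootSet_isSplittingField hsplit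
  have := Normal.of_isSplittingField (F := F) (E := adjoin F (p.rootSet K)) p
  have hroot : ∀ {x : K} (hx : x ∈ p.rootSet K),
      aeval (⟨x, subset_adjoin F _ hx⟩ : adjoin F (p.rootSet K)) p = 0 := fun hx =>
    (aeval_mk_eq_zero_iff _ p).mpr (mem_rootSet.mp hx).2
  exact (Normal.minpoly_eq_iff_mem_orbit _).mp <|
    (minpoly.eq_of_irreducible hp (hroot hb)).symm.trans (minpoly.eq_of_irreducible hp (hroot ha))

theorem RingHom.prod_zpow_eq_one_iff {L K ι : Type*} [Field L] [Field K] [Fintype ι]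
    (f : L →+* K) (x : ι → L) (m : ι → ℤ) :
    ∏ j, f (x j) ^ m j = 1 ↔ ∏ j, x j ^ m j = 1 := by
  simp only [← map_zpow₀, ← map_prod, map_eq_one_iff f f.injective]

theorem eq_zero_of_prod_zpow_eq_one {E ι : Type*} [NormedField E] [Fintype ι] {y : ι → E}
    {m : ι → ℤ} (hprod : ∏ j, y j ^ m j = 1) {i : ι} (hy : ∀ j ≠ i, ‖y j‖ = 1)
    (hi : ‖y i‖ ≠ 1) : m i = 0 := by
  have : ‖y i‖ ^ m i = 1 := by
    rw [← Finset.prod_eq_single_of_mem (f := fun j => ‖y j‖ ^ m j) i (Finset.mem_univ i)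
      fun j _ hj => by rw [hy j hj, one_zpow]]
    simpa only [norm_prod, norm_zpow, norm_one] using congrArg norm hprod
  exact (zpow_eq_one_iff_right₀ (norm_nonneg _) hi).mp this

theorem Complex.inv_ne_of_im_pos {z w : ℂ} (hz : 0 < z.im) (hw : 0 < w.im) : z⁻¹ ≠ w := by
  rintro rfl
  rw [inv_im, neg_div] at hw
  have : 0 ≤ z.im / normSq z := div_nonneg hz.le (normSq_nonneg z)
  linarith

theorem Complex.aeval_ofReal_minpoly (x : ℝ) : aeval (x : ℂ) (minpoly ℚ x) = 0 := by
  rw [← Complex.coe_algebraMap, aeval_algebraMap_apply, minpoly.aeval, map_zero]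

namespace IsSalem

variable {s : ℝ} (hs : IsSalem s)
include hs

theorem isIntegral : IsIntegral ℚ s := hs.2.1.tower_top

theorem norm_eq_one {w : ℂ} (hw : aeval w (minpoly ℚ s) = 0) (hws : w ≠ s)
    (hws_inv : w ≠ (s : ℂ)⁻¹) : ‖w‖ = 1 := by
  rcases hs.2.2.2.2 w hw with h | h | h
  · exact absurd h hws
  · exact absurd (h.trans (Complex.ofReal_inv s)) hws_inv
  · exact h

end IsSalem

theorem salem_conjugates_multiplicatively_independent_general {s : ℝ} (hs : IsSalem s)
    {k : ℕ} (z : Fin k → ℂ) (hinj : Function.Injective z)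
    (hroot : ∀ j, Polynomial.aeval (z j) (minpoly ℚ s) = 0)
    (him : ∀ j, 0 < (z j).im)
    (m : Fin k → ℤ) (hprod : ∏ j, (z j) ^ (m j) = 1) :
    ∀ j, m j = 0 := by
  intro i
  set p := minpoly ℚ s
  set L := adjoin ℚ (p.rootSet ℂ)
  have hmem : ∀ {w : ℂ}, aeval w p = 0 → w ∈ p.rootSet ℂ := fun hw =>
    mem_rootSet.mpr ⟨minpoly.ne_zero hs.isIntegral, hw⟩
  obtain ⟨σ, hσ⟩ := exists_algEquiv_adjoin_rootSet_apply_eq (minpoly.irreducible hs.isIntegral)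
    (IsAlgClosed.splits _) (hmem (hroot i)) (hmem (Complex.aeval_ofReal_minpoly s))
  let x : Fin k → L := fun j => ⟨z j, subset_adjoin ℚ _ (hmem (hroot j))⟩
  let φ : L →ₐ[ℚ] ℂ := L.val.comp σ.toAlgHom
  have hφi : φ (x i) = s := congrArg Subtype.val hσ
  have hφ_norm : ∀ j ≠ i, ‖φ (x j)‖ = 1 := fun j hj => by
    refine hs.norm_eq_one ?_ (fun h => hj (hinj ?_)) (fun h => ?_)
    · rw [aeval_algHom_apply, show aeval (x j) p = 0 from (aeval_mk_eq_zero_iff _ p).mpr (hroot j),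
        map_zero]
    · exact congrArg Subtype.val (φ.injective (h.trans hφi.symm))
    · have hx : (x i)⁻¹ = x j := φ.injective <|
        show φ (x i)⁻¹ = φ (x j) by rw [map_inv₀, hφi, h]
      exact Complex.inv_ne_of_im_pos (him i) (him j) (congrArg Subtype.val hx)
  have hφ_prod : ∏ j, φ (x j) ^ m j = 1 :=
    ((φ : L →+* ℂ).prod_zpow_eq_one_iff x m).mpr
      (((L.val : L →+* ℂ).prod_zpow_eq_one_iff x m).mp hprod)
  refine eq_zero_of_prod_zpow_eq_one hφ_prod hφ_norm ?_
  rw [hφi, Complex.norm_real, Real.norm_of_nonneg (by linarith [hs.1])]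
  exact hs.1.ne'

/-- The Galois conjugates of a Salem number lying on the unit circle with positive
imaginary part are multiplicatively independent. -/
theorem salem_conjugates_multiplicatively_independent {s : ℝ} (hs : IsSalem s)
    {k : ℕ} (z : Fin k → ℂ) (hinj : Function.Injective z)
    (hroot : ∀ j, Polynomial.aeval (z j) (minpoly ℚ s) = 0)
    (him : ∀ j, 0 < (z j).im)
    (hall : ∀ w : ℂ, Polynomial.aeval w (minpoly ℚ s) = 0 → 0 < w.im → ∃ j, z j = w)
    (m : Fin k → ℤ) (hprod : ∏ j, (z j) ^ (m j) = 1) :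
    ∀ j, m j = 0 :=
  salem_conjugates_multiplicatively_independent_general hs z hinj hroot him m hprod
end

section
/- For any Salem number s and any open arc of the complex unit circle containing 1, there exist infinitely many positive integers m such that every complex (non-real) Galois conjugate of s^m lies in that arc. -/
/-!
Every non-real conjugate of `s ^ m` is `w ^ m` for a conjugate `w` of `s`, and such a `w` lies
on the unit circle, because the only conjugates off the circle, `s` and `s⁻¹`, are real. The
finitely many conjugates on the circle form one element of the compact group `Circle → Circle`,
and in a compact group the powers of any element return infinitely often to every neighbourhood
of `1`: two powers close to a cluster point of the sequence differ by a power close to `1`.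
So no multiplicative independence of the conjugates (Kronecker) is needed.
-/

open Polynomial Filter Topology IntermediateField

theorem exists_aeval_minpoly_eq_zero_and_aeval_eq {F E K : Type*} [Field F] [Field E] [Field K]
    [Algebra F E] [Algebra F K] [IsAlgClosed K] {x : E} (hx : IsIntegral F x) (p : F[X])
    {z : K} (hz : aeval z (minpoly F (aeval x p)) = 0) :
    ∃ w : K, aeval w (minpoly F x) = 0 ∧ aeval w p = z := by
  have hsplit : ∀ t ∈ ({x} : Set E),
      IsIntegral F t ∧ ((minpoly F t).map (algebraMap F K)).Splits := by
    rintro t rfl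
    exact ⟨hx, IsAlgClosed.splits _⟩
  have hcoe : ((aeval (AdjoinSimple.gen F x) p : F⟮x⟯) : E) = aeval x p := by
    rw [← IntermediateField.algebraMap_apply, ← aeval_algebraMap_apply]; rfl
  obtain ⟨φ, hφ⟩ := exists_algHom_adjoin_of_splits_of_aeval hsplit
    (aeval (AdjoinSimple.gen F x) p).2 (hcoe ▸ hz)
  refine ⟨φ (AdjoinSimple.gen F x), ?_, ?_⟩
  · rw [aeval_algHom_apply, aeval_gen_minpoly, map_zero]
  · rw [aeval_algHom_apply, ← hφ]

theorem frequently_pow_mem_nhds_one {G : Type*} [Group G] [TopologicalSpace G]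
    [IsTopologicalGroup G] [CompactSpace G] (g : G) {U : Set G} (hU : U ∈ 𝓝 1) :
    ∃ᶠ m in atTop, g ^ m ∈ U := by
  obtain ⟨L, hL⟩ := exists_clusterPt_of_compactSpace (map (g ^ ·) atTop)
  obtain ⟨V, hV, hVU⟩ := exists_nhds_split_inv hU
  have hnear : ∀ᶠ y in 𝓝 L, y / L ∈ V :=
    (continuous_id.div_const L).tendsto' L 1 (div_self' L) hV
  have hrec : ∃ᶠ n in atTop, g ^ n / L ∈ V := MapClusterPt.frequently hL hnear
  rw [frequently_atTop] at hrec ⊢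
  intro N
  obtain ⟨n, -, hn⟩ := hrec 0
  obtain ⟨n', hn', hn'V⟩ := hrec (n + N)
  refine ⟨n' - n, by omega, ?_⟩
  rw [pow_sub g (by omega : n ≤ n'), ← div_eq_mul_inv]
  simpa only [div_div_div_cancel_right] using hVU _ hn'V _ hn

theorem Complex.im_ne_zero_of_im_pow_ne_zero {w : ℂ} {m : ℕ} (h : (w ^ m).im ≠ 0) :
    w.im ≠ 0 := by
  rw [Ne, ← conj_eq_iff_im] at h ⊢
  exact fun hw ↦ h (by rw [map_pow, hw])

theorem IsSalem.norm_eq_one_of_im_ne_zero {s : ℝ} (hs : IsSalem s) {w : ℂ}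
    (hw : aeval w (minpoly ℚ s) = 0) (him : w.im ≠ 0) : ‖w‖ = 1 := by
  obtain rfl | rfl | h := hs.2.2.2.2 w hw
  · exact absurd (Complex.ofReal_im s) him
  · exact absurd (Complex.ofReal_im s⁻¹) him
  · exact h

/-- For any Salem number `s` and any open arc of the unit circle containing `1`,
there are infinitely many positive integers `m` such that every non-real Galois
conjugate of `s ^ m` lies in that arc. -/
theorem salem_pow_conjugates_in_arc {s : ℝ} (hs : IsSalem s)
    (A : Set ℂ) (hA : IsOpen ((↑) ⁻¹' A : Set Circle)) (h1 : (1 : ℂ) ∈ A) :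
    {m : ℕ | 0 < m ∧ ∀ z : ℂ, Polynomial.aeval z (minpoly ℚ (s ^ m)) = 0 →
      z.im ≠ 0 → z ∈ A}.Infinite := by
  have hsQ : IsIntegral ℚ s := hs.2.1.tower_top
  set R : Set Circle := (↑) ⁻¹' (minpoly ℚ s).rootSet ℂ
  have hR : R.Finite := ((minpoly ℚ s).rootSet_finite ℂ).preimage Circle.coe_injective.injOn
  have hU : R.pi (fun _ ↦ (↑) ⁻¹' A) ∈ 𝓝 (1 : Circle → Circle) :=
    set_pi_mem_nhds hR fun _ _ ↦ hA.mem_nhds h1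
  refine Nat.frequently_atTop_iff_infinite.1 <|
    ((frequently_pow_mem_nhds_one id hU).and_eventually (eventually_gt_atTop 0)).mono ?_
  rintro m ⟨hm, hpos⟩
  refine ⟨hpos, fun z hz him ↦ ?_⟩
  obtain ⟨w, hw, rfl⟩ := exists_aeval_minpoly_eq_zero_and_aeval_eq hsQ (X ^ m) (z := z)
    (by rwa [aeval_X_pow])
  rw [aeval_X_pow] at him ⊢
  have hw1 := hs.norm_eq_one_of_im_ne_zero hw (Complex.im_ne_zero_of_im_pow_ne_zero him)
  exact hm ⟨w, mem_sphere_zero_iff_norm.2 hw1⟩ (mem_rootSet.2 ⟨minpoly.ne_zero hsQ, hw⟩)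
end

section
/- For a unit complex number t = e^{iθ} with 0 < |θ| < 2π/(n+1), Squier's tridiagonal matrix J_{n,t} (with t = x^2, x = e^{iθ/2}) is positive definite; its determinant vanishes only when t is a nontrivial (n+1)-th root of unity. -/
/-- Squier's real tridiagonal form: the `n × n` real symmetric matrix with diagonal
entries `2 cos(θ/2)` and off-diagonal entries `-1`, where `t = e^{iθ}`. -/
noncomputable def squierFormReal (n : ℕ) (θ : ℝ) : Matrix (Fin n) (Fin n) ℝ :=
  fun i j =>
    if (i : ℕ) = (j : ℕ) then 2 * Real.cos (θ / 2)
    else if (i : ℕ) + 1 = (j : ℕ) ∨ (j : ℕ) + 1 = (i : ℕ) then -1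
    else 0

/-!
Positive definiteness is Picone's identity for the discrete Laplacian: if `s 0 = 0`, `s > 0` on
`1, …, n + 1` and `s k + s (k + 2) < d s (k + 1)`, then, for `a n = 0`,
`∑ (d a_k² - 2 a_k a_{k+1})` is a telescoping sum plus strictly positive multiples of the `a_k²`
plus squares. For `J_{n,t}` take `s k = sin (k φ)` with `|θ|/2 < φ < π/(n+1)`; the strict
inequality is `cos φ < cos (θ/2)`.

For the determinant, expansion along the first row gives the Chebyshev recursion, so
`det J_{n,t} = U_n(cos (θ/2))` and `sin (θ/2) det J_{n,t} = sin ((n+1) θ/2)`. Since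
`U_n(±1) = ±(n+1) ≠ 0`, a vanishing determinant forces `sin (θ/2) ≠ 0` and
`sin ((n+1) θ/2) = 0`, i.e. `t ≠ 1` and `t^{n+1} = 1`.
-/

open Finset Matrix Real Polynomial.Chebyshev

lemma picone_identity {K : Type*} [Field K] (d p q r a b : K) (hq : q ≠ 0) (hr : r ≠ 0) :
    d * a ^ 2 - 2 * (a * b) =
      (d - (p + r) / q) * a ^ 2 + (r * a - q * b) ^ 2 / (q * r) +
        (p / q * a ^ 2 - q / r * b ^ 2) := by
  field_simp
  ring

theorem sum_tridiagonal_pos_of_supersolution {K : Type*} [Field K] [LinearOrder K]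
    [IsStrictOrderedRing K] {n : ℕ} {d : K} {s : ℕ → K} (hs0 : s 0 = 0)
    (hs : ∀ k, 1 ≤ k → k ≤ n + 1 → 0 < s k)
    (hsuper : ∀ k < n, s k + s (k + 2) < d * s (k + 1))
    {a : ℕ → K} (ha : a n = 0) {i : ℕ} (hi : i < n) (hai : a i ≠ 0) :
    0 < ∑ k ∈ range n, (d * a k ^ 2 - 2 * (a k * a (k + 1))) := by
  have hq : ∀ k < n, 0 < s (k + 1) := fun k hk => hs _ (by omega) (by omega)
  have hr : ∀ k < n, 0 < s (k + 2) := fun k hk => hs _ (by omega) (by omega)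
  have hgap : ∀ k < n, 0 < d - (s k + s (k + 2)) / s (k + 1) := fun k hk =>
    sub_pos.2 ((div_lt_iff₀ (hq k hk)).2 (hsuper k hk))
  have htel : ∑ k ∈ range n,
      (s k / s (k + 1) * a k ^ 2 - s (k + 1) / s (k + 2) * a (k + 1) ^ 2) = 0 := by
    rw [sum_range_sub' (f := fun k => s k / s (k + 1) * a k ^ 2)]
    simp [hs0, ha]
  calc 0 < ∑ k ∈ range n, ((d - (s k + s (k + 2)) / s (k + 1)) * a k ^ 2 +
          (s (k + 2) * a k - s (k + 1) * a (k + 1)) ^ 2 / (s (k + 1) * s (k + 2))) := by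
        refine sum_pos' (fun k hk => ?_) ⟨i, mem_range.2 hi, ?_⟩
        · have := hgap k (mem_range.1 hk)
          have := hq k (mem_range.1 hk)
          have := hr k (mem_range.1 hk)
          positivity
        · have := hgap i hi
          have := hq i hi
          have := hr i hi
          positivity
    _ = ∑ k ∈ range n, (d * a k ^ 2 - 2 * (a k * a (k + 1))) := by
        rw [← add_zero (∑ k ∈ range n, _), ← htel, ← sum_add_distrib]
        refine sum_congr rfl fun k hk => (picone_identity _ _ _ _ _ _ ?_ ?_).symm
        exacts [(hq k (mem_range.1 hk)).ne', (hr k (mem_range.1 hk)).ne']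

def extendByZero {α : Type*} [Zero α] {n : ℕ} (x : Fin n → α) (k : ℕ) : α :=
  if h : k < n then x ⟨k, h⟩ else 0

def shiftMatrix (R : Type*) [Zero R] [One R] (n : ℕ) : Matrix (Fin n) (Fin n) R :=
  of fun i j => if (i : ℕ) + 1 = j then 1 else 0

lemma shiftMatrix_mulVec {R : Type*} [NonAssocSemiring R] {n : ℕ} (x : Fin n → R) (i : Fin n) :
    (shiftMatrix R n *ᵥ x) i = extendByZero x (i + 1) := by
  simp only [mulVec, dotProduct, shiftMatrix, of_apply, ite_mul, one_mul, zero_mul, extendByZero]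
  split_ifs with h
  · rw [sum_eq_single ⟨i + 1, h⟩ (fun j _ hj => if_neg fun e => hj (Fin.ext e.symm)) (by simp)]
    simp
  · exact sum_eq_zero fun j _ => if_neg fun e => h (by omega)

lemma squierFormReal_eq (n : ℕ) (θ : ℝ) :
    squierFormReal n θ = (2 * cos (θ / 2)) • 1 - shiftMatrix ℝ n - (shiftMatrix ℝ n)ᵀ := by
  ext i j
  simp only [squierFormReal, shiftMatrix, Matrix.sub_apply, Matrix.smul_apply, one_apply,
    transpose_apply, of_apply, smul_eq_mul, Fin.ext_iff]
  split_ifs <;> first | omega | ring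

lemma squierFormReal_isHermitian (n : ℕ) (θ : ℝ) : (squierFormReal n θ).IsHermitian := by
  ext i j
  simp only [conjTranspose_apply, star_trivial, squierFormReal]
  split_ifs <;> first | rfl | omega

lemma dotProduct_squierFormReal_mulVec (n : ℕ) (θ : ℝ) (x : Fin n → ℝ) :
    x ⬝ᵥ (squierFormReal n θ *ᵥ x) = ∑ k ∈ range n,
      (2 * cos (θ / 2) * extendByZero x k ^ 2 -
        2 * (extendByZero x k * extendByZero x (k + 1))) := by
  have hT : x ⬝ᵥ ((shiftMatrix ℝ n)ᵀ *ᵥ x) = x ⬝ᵥ (shiftMatrix ℝ n *ᵥ x) := by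
    rw [mulVec_transpose, dotProduct_comm, ← dotProduct_mulVec]
  rw [squierFormReal_eq, sub_mulVec, sub_mulVec, dotProduct_sub, dotProduct_sub, hT,
    smul_mulVec, one_mulVec, dotProduct_smul, ← Fin.sum_univ_eq_sum_range]
  simp only [dotProduct, shiftMatrix_mulVec, smul_eq_mul, mul_sum, ← sum_sub_distrib]
  refine sum_congr rfl fun i _ => ?_
  simp only [extendByZero, i.isLt, dif_pos, Fin.eta]
  ring

theorem squierFormReal_posDef_of_cos_lt {n : ℕ} {θ φ : ℝ} (hφ : 0 < φ) (hφn : (n + 1) * φ < π)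
    (hcos : cos φ < cos (θ / 2)) : (squierFormReal n θ).PosDef := by
  refine .of_dotProduct_mulVec_pos (squierFormReal_isHermitian n θ) fun x hx => ?_
  obtain ⟨i, hi⟩ := Function.ne_iff.1 hx
  have hsin : ∀ k : ℕ, 1 ≤ k → k ≤ n + 1 → 0 < sin (k * φ) := fun k hk₁ hk₂ => by
    have hk₁ : (1 : ℝ) ≤ k := by exact_mod_cast hk₁
    have hk₂ : (k : ℝ) ≤ n + 1 := by exact_mod_cast hk₂
    exact sin_pos_of_pos_of_lt_pi (by nlinarith) (by nlinarith)
  rw [star_trivial, dotProduct_squierFormReal_mulVec]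
  refine sum_tridiagonal_pos_of_supersolution (s := fun k => sin (k * φ)) (by simp) hsin
    (fun k hk => ?_) (by simp [extendByZero]) i.isLt (by simpa [extendByZero] using hi)
  have hmid := hsin (k + 1) (by omega) (by omega)
  calc sin (k * φ) + sin ((k + 2 : ℕ) * φ) = 2 * cos φ * sin ((k + 1 : ℕ) * φ) := by
        rw [mul_right_comm, two_mul_sin_mul_cos]
        push_cast
        ring_nf
    _ < 2 * cos (θ / 2) * sin ((k + 1 : ℕ) * φ) := by gcongr

lemma squierFormReal_apply_eq_zero {n : ℕ} (θ : ℝ) {i j : Fin n}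
    (h : (i : ℕ) + 1 < j ∨ (j : ℕ) + 1 < i) : squierFormReal n θ i j = 0 := by
  simp only [squierFormReal]
  rw [if_neg (by omega), if_neg (by omega)]

lemma squierFormReal_submatrix_succ (n : ℕ) (θ : ℝ) :
    (squierFormReal (n + 1) θ).submatrix Fin.succ Fin.succ = squierFormReal n θ := by
  ext i j
  simp only [submatrix_apply, squierFormReal, Fin.val_succ]
  split_ifs <;> first | rfl | omega

lemma det_squierFormReal_add_two (n : ℕ) (θ : ℝ) :
    (squierFormReal (n + 2) θ).det =
      2 * cos (θ / 2) * (squierFormReal (n + 1) θ).det - (squierFormReal n θ).det := by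
  set J := squierFormReal (n + 2) θ
  have hrow (j : Fin n) : J 0 j.succ.succ = 0 :=
    squierFormReal_apply_eq_zero θ (by simp)
  have hminor : (J.submatrix Fin.succ (Fin.succAbove 1)).det = -(squierFormReal n θ).det := by
    have hsucc : Fin.succAbove 1 ∘ Fin.succ = Fin.succ ∘ (Fin.succ : Fin n → Fin (n + 1)) :=
      funext Fin.one_succAbove_succ
    have hM : (J.submatrix Fin.succ (Fin.succAbove 1)).submatrix (Fin.succAbove 0) Fin.succ =
        squierFormReal n θ := by
      rw [submatrix_submatrix, hsucc, Fin.succAbove_zero, ← submatrix_submatrix,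
        squierFormReal_submatrix_succ, squierFormReal_submatrix_succ]
    rw [det_succ_column_zero, Fin.sum_univ_succ, hM]
    simp [J, squierFormReal]
  rw [det_succ_row_zero, Fin.sum_univ_succ, Fin.sum_univ_succ]
  simp only [hrow, mul_zero, zero_mul, sum_const_zero, add_zero, Fin.succAbove_zero,
    Fin.succ_zero_eq_one, hminor, J, squierFormReal_submatrix_succ]
  have h00 : squierFormReal (n + 2) θ 0 0 = 2 * cos (θ / 2) := by simp [squierFormReal]
  have h01 : squierFormReal (n + 2) θ 0 1 = -1 := by simp [squierFormReal]
  rw [h00, h01, Fin.val_zero, Fin.val_one, pow_zero, pow_one]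
  ring

lemma det_squierFormReal_eq_eval_U (n : ℕ) (θ : ℝ) :
    (squierFormReal n θ).det = (U ℝ n).eval (cos (θ / 2)) := by
  induction n using Nat.twoStepInduction with
  | zero => simp
  | one => simp [squierFormReal]
  | more n ih₀ ih₁ =>
    rw [det_squierFormReal_add_two, ih₀, ih₁]
    push_cast
    simp [U_add_two]

lemma sin_half_mul_det_squierFormReal (n : ℕ) (θ : ℝ) :
    sin (θ / 2) * (squierFormReal n θ).det = sin ((n + 1) * (θ / 2)) := by
  rw [det_squierFormReal_eq_eval_U, mul_comm]
  exact_mod_cast U_real_cos (θ / 2) n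

lemma det_squierFormReal_ne_zero_of_sin_half_eq_zero (n : ℕ) {θ : ℝ} (h : sin (θ / 2) = 0) :
    (squierFormReal n θ).det ≠ 0 := by
  rw [det_squierFormReal_eq_eval_U]
  rcases sin_eq_zero_iff_cos_eq.1 h with hcos | hcos <;> rw [hcos]
  · exact_mod_cast (U_eval_one ℝ n).trans_ne (by positivity)
  · rw [U_eval_neg_one]
    exact mul_ne_zero (by simp) (by positivity)

lemma Complex.exp_ofReal_mul_I_eq_one_iff (x : ℝ) :
    Complex.exp (x * Complex.I) = 1 ↔ Real.sin (x / 2) = 0 := by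
  rw [Complex.exp_eq_one_iff, Real.sin_eq_zero_iff]
  refine exists_congr fun k => ?_
  rw [show (k : ℂ) * (2 * π * Complex.I) = ((2 * k * π : ℝ) : ℂ) * Complex.I by push_cast; ring,
    mul_left_inj' Complex.I_ne_zero, Complex.ofReal_inj]
  constructor <;> intro h <;> linarith

theorem squierFormReal_posDef_of_abs_lt {n : ℕ} {θ : ℝ} (h : |θ| < 2 * π / (n + 1)) :
    (squierFormReal n θ).PosDef := by
  have hn : (0 : ℝ) < n + 1 := by positivity
  have hθ : |θ| / 2 < π / (n + 1) := by
    rw [mul_div_assoc] at h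
    linarith
  obtain ⟨φ, hφ₁, hφ₂⟩ := exists_between hθ
  refine squierFormReal_posDef_of_cos_lt (φ := φ) (by linarith [abs_nonneg θ]) ?_ ?_
  · rwa [lt_div_iff₀ hn, mul_comm] at hφ₂
  · rw [← cos_abs (θ / 2), abs_div, abs_two]
    refine cos_lt_cos_of_nonneg_of_le_pi (by positivity) ?_ (by linarith)
    have : π / (n + 1) ≤ π := div_le_self pi_pos.le (by linarith)
    linarith

theorem squierFormReal_posDef_general (n : ℕ) (θ : ℝ)
    (h1 : |θ| < 2 * Real.pi / (n + 1)) :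
    (squierFormReal n θ).PosDef ∧
    ∀ ψ : ℝ, (squierFormReal n ψ).det = 0 →
      Complex.exp (ψ * Complex.I) ^ (n + 1) = 1 ∧ Complex.exp (ψ * Complex.I) ≠ 1 := by
  refine ⟨squierFormReal_posDef_of_abs_lt h1, fun ψ hdet => ⟨?_, ?_⟩⟩
  · have hpow : Complex.exp (ψ * Complex.I) ^ (n + 1) =
        Complex.exp (((n + 1) * ψ : ℝ) * Complex.I) := by
      rw [← Complex.exp_nat_mul]
      push_cast
      ring_nf
    rw [hpow, Complex.exp_ofReal_mul_I_eq_one_iff, mul_div_assoc,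
      ← sin_half_mul_det_squierFormReal, hdet, mul_zero]
  · rw [Ne, Complex.exp_ofReal_mul_I_eq_one_iff]
    exact fun h => det_squierFormReal_ne_zero_of_sin_half_eq_zero n h hdet

/-- For `t = e^{iθ}` with `0 < |θ| < 2π/(n+1)`, Squier's form is positive definite;
moreover its determinant vanishes only when `t` is a nontrivial `(n+1)`-st root of
unity. -/
theorem squierFormReal_posDef (n : ℕ) (θ : ℝ)
    (h0 : 0 < |θ|) (h1 : |θ| < 2 * Real.pi / (n + 1)) :
    (squierFormReal n θ).PosDef ∧
    ∀ ψ : ℝ, (squierFormReal n ψ).det = 0 →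
      Complex.exp (ψ * Complex.I) ^ (n + 1) = 1 ∧ Complex.exp (ψ * Complex.I) ≠ 1 :=
  squierFormReal_posDef_general n θ h1
end
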